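/- Let F be a one-dimensional commutative formal group law over a commutative ring R, with a₁₁, a₁₂, a₁₃, a₂₂ ∈ R the coefficients of xy, x²y, x³y, x²y² in F respectively, and let g ∈ R[[x,y]] be the unique series with F(x,y) = x + y - xy·g(x,y). Then the series g(x -_F y, y -_F x) and -a₁₁ - (a₁₁a₁₂ + 2a₁₃ - a₂₂)(x - y)² have equal coefficients in all total degrees < 3. -/

import Mathlib

/-!
Formal group law preliminaries: substitution of (multivariate) formal power series,
the definition of a one-dimensional commutative formal group law, its formal inverse,
and the formal difference `x -_F y := F(x, ι(y))`.
-/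

noncomputable section

open MvPowerSeries

/-- Substitution `f(a 0, a 1, …)` of multivariate power series (the intended use is when
each `a i` has zero constant coefficient): the coefficient at `e` only receives
contributions from monomials of `f` with exponent `d` such that each `d i` is at most the
total degree of `e`. -/
def MvPowerSeries.substSeries {σ τ R : Type*} [Fintype σ] [DecidableEq σ] [CommRing R]
    (a : σ → MvPowerSeries τ R) (f : MvPowerSeries σ R) : MvPowerSeries τ R :=
  fun e => ∑ d ∈ Finset.Iic (Finsupp.equivFunOnFinite.symm fun _ : σ => e.sum fun _ n => n),
    MvPowerSeries.coeff (R := R) d f * MvPowerSeries.coeff (R := R) e (∏ i, (a i) ^ d i)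

/-- A one-dimensional commutative formal group law over a commutative ring `R`:
a power series `F ∈ R[[x,y]]` with `F(x,0) = x`, `F(0,y) = y`, `F(x,y) = F(y,x)` and
`F(F(x,y),z) = F(x,F(y,z))` (an identity of power series in `R[[x,y,z]]`). -/
structure IsFormalGroupLaw (R : Type*) [CommRing R] (F : MvPowerSeries (Fin 2) R) : Prop where
  subst_zero_right :
    MvPowerSeries.substSeries (![X 0, 0] : Fin 2 → MvPowerSeries (Fin 2) R) F = X 0
  subst_zero_left :
    MvPowerSeries.substSeries (![0, X 1] : Fin 2 → MvPowerSeries (Fin 2) R) F = X 1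
  comm :
    MvPowerSeries.substSeries (![X 1, X 0] : Fin 2 → MvPowerSeries (Fin 2) R) F = F
  assoc :
    MvPowerSeries.substSeries
      (![MvPowerSeries.substSeries (![X 0, X 1] : Fin 2 → MvPowerSeries (Fin 3) R) F, X 2] :
        Fin 2 → MvPowerSeries (Fin 3) R) F
    = MvPowerSeries.substSeries
      (![X 0, MvPowerSeries.substSeries (![X 1, X 2] : Fin 2 → MvPowerSeries (Fin 3) R) F] :
        Fin 2 → MvPowerSeries (Fin 3) R) F

/-- `ι` is the formal inverse of the formal group law `F`: a univariate power series with
zero constant term such that `F(x, ι(x)) = 0`. -/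
def IsFormalInverse {R : Type*} [CommRing R] (F : MvPowerSeries (Fin 2) R)
    (ι : PowerSeries R) : Prop :=
  PowerSeries.constantCoeff (R := R) ι = 0 ∧
    MvPowerSeries.substSeries (![PowerSeries.X, ι] : Fin 2 → PowerSeries R) F = 0

/-- The formal difference `x -_F y := F(x, ι(y))`. -/
def fDiff {R : Type*} [CommRing R] (F : MvPowerSeries (Fin 2) R) (ι : PowerSeries R) :
    MvPowerSeries (Fin 2) R :=
  MvPowerSeries.substSeries
    (![X 0, MvPowerSeries.substSeries (fun _ : Unit => (X 1 : MvPowerSeries (Fin 2) R)) ι] :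
      Fin 2 → MvPowerSeries (Fin 2) R) F

/-- The formal difference `y -_F x := F(y, ι(x))`. -/
def fDiffSwap {R : Type*} [CommRing R] (F : MvPowerSeries (Fin 2) R) (ι : PowerSeries R) :
    MvPowerSeries (Fin 2) R :=
  MvPowerSeries.substSeries
    (![X 1, MvPowerSeries.substSeries (fun _ : Unit => (X 0 : MvPowerSeries (Fin 2) R)) ι] :
      Fin 2 → MvPowerSeries (Fin 2) R) F

/-!
Work modulo series of order at least 3. The relation `F = x + y - xy g` gives
`F(a, b) ≡ a + b + a₁₁ab` whenever `a, b` have no constant term, hence `ι(t) ≡ -t + a₁₁t²`,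
`x -_F y ≡ (x - y)(1 - a₁₁y)` and `y -_F x ≡ -(x - y)(1 - a₁₁x)`. Commutativity of `F` makes the
2-jet of `g` symmetric, `g ≡ -a₁₁ - a₁₂(x + y) - a₁₃(x² + y²) - a₂₂xy`. Substituting, the degree-1
terms cancel, the degree-2 terms give `-(a₁₁a₁₂ + 2a₁₃ - a₂₂)(x - y)²`, and everything else is a
multiple of `(x - y)²x` or `(x - y)²y`.
-/

open Finsupp (single)

theorem Finsupp.degree_fin_two (d : Fin 2 →₀ ℕ) : d.degree = d 0 + d 1 := by
  rw [Finsupp.degree_eq_sum, Fin.sum_univ_two]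

namespace MvPowerSeries

variable {σ τ R : Type*} [CommRing R]

theorem degree_le_order_prod_pow {a : σ → MvPowerSeries τ R}
    (ha : ∀ i, constantCoeff (a i) = 0) (d : σ →₀ ℕ) :
    (d.degree : ℕ∞) ≤ order (d.prod fun i n => a i ^ n) := by
  refine le_trans ?_ (le_order_prod _ d.support)
  rw [Finsupp.degree_apply, Nat.cast_sum]
  exact Finset.sum_le_sum fun i _ => le_order_pow_of_constantCoeff_eq_zero _ (ha i)

theorem substSeries_eq_subst [Fintype σ] [DecidableEq σ] {a : σ → MvPowerSeries τ R}
    (ha : ∀ i, constantCoeff (a i) = 0) (f : MvPowerSeries σ R) :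
    substSeries a f = subst a f := by
  ext e
  rw [coeff_subst (hasSubst_of_constantCoeff_zero ha), finsum_eq_sum_of_support_subset
    (s := Finset.Iic (Finsupp.equivFunOnFinite.symm fun _ : σ => e.degree))]
  · refine Finset.sum_congr rfl fun d _ => ?_
    rw [smul_eq_mul, Finsupp.prod_fintype _ _ fun _ => pow_zero _]
  · intro d hd
    by_contra hd'
    obtain ⟨i, hi⟩ : ∃ i, e.degree < d i := by
      simpa [Finsupp.le_def] using hd'
    refine hd (smul_eq_zero_of_right _ (coeff_of_lt_order ?_))
    calc (e.degree : ℕ∞) < d.degree := by exact_mod_cast hi.trans_le (Finsupp.le_degree i d)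
      _ ≤ _ := degree_le_order_prod_pow ha d

theorem constantCoeff_substSeries_eq_zero [Fintype σ] [DecidableEq σ]
    {a : σ → MvPowerSeries τ R} (ha : ∀ i, constantCoeff (a i) = 0) {f : MvPowerSeries σ R}
    (hf : constantCoeff f = 0) :
    constantCoeff (substSeries a f) = 0 := by
  rw [substSeries_eq_subst ha]
  exact constantCoeff_subst_eq_zero (hasSubst_of_constantCoeff_zero ha) ha hf

variable (σ R) in
def orderIdeal (n : ℕ) : Ideal (MvPowerSeries σ R) where
  carrier := {f | (n : ℕ∞) ≤ f.order}
  add_mem' hf hg := (le_min hf hg).trans min_order_le_add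
  zero_mem' := by simp
  smul_mem' c _ hf := hf.trans (le_add_self.trans le_order_mul)

section orderIdeal

variable {f g : MvPowerSeries σ R} {m n : ℕ}

theorem mem_orderIdeal : f ∈ orderIdeal σ R n ↔ (n : ℕ∞) ≤ f.order := Iff.rfl

theorem mem_orderIdeal_one : f ∈ orderIdeal σ R 1 ↔ constantCoeff f = 0 := by
  rw [mem_orderIdeal, Nat.cast_one, one_le_order_iff_constCoeff_eq_zero]

theorem mul_mem_orderIdeal (hf : f ∈ orderIdeal σ R m) (hg : g ∈ orderIdeal σ R n) :
    f * g ∈ orderIdeal σ R (m + n) := by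
  rw [mem_orderIdeal, Nat.cast_add]
  exact (add_le_add hf hg).trans le_order_mul

theorem coeff_eq_coeff_of_smodEq (h : f ≡ g [SMOD orderIdeal σ R n]) {d : σ →₀ ℕ}
    (hd : d.degree < n) : coeff d f = coeff d g := by
  rw [← sub_eq_zero, ← map_sub]
  exact coeff_of_lt_order ((Nat.cast_lt.mpr hd).trans_le (SModEq.sub_mem.mp h))

theorem subst_mem_orderIdeal [Finite σ] {a : σ → MvPowerSeries τ R}
    (ha : ∀ i, constantCoeff (a i) = 0) (hf : f ∈ orderIdeal σ R n) :
    subst a f ∈ orderIdeal τ R n := by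
  have h1 : 1 ≤ ⨅ i, (a i).order :=
    le_iInf fun i => one_le_order_iff_constCoeff_eq_zero.mpr (ha i)
  calc (n : ℕ∞) ≤ f.order := hf
    _ = 1 * f.order := (one_mul _).symm
    _ ≤ (⨅ i, (a i).order) * f.order := mul_le_mul_left h1 _
    _ ≤ (subst a f).order := le_order_subst (hasSubst_of_constantCoeff_zero ha) f

theorem subst_smodEq_subst [Finite σ] {a : σ → MvPowerSeries τ R}
    (ha : ∀ i, constantCoeff (a i) = 0) (h : f ≡ g [SMOD orderIdeal σ R n]) :
    subst a f ≡ subst a g [SMOD orderIdeal τ R n] := by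
  rw [SModEq.sub_mem] at h ⊢
  rw [← subst_sub (hasSubst_of_constantCoeff_zero ha)]
  exact subst_mem_orderIdeal ha h

theorem mul_mul_mem_orderIdeal_three {p q r : MvPowerSeries σ R} (hp : constantCoeff p = 0)
    (hq : constantCoeff q = 0) (hr : constantCoeff r = 0) : p * q * r ∈ orderIdeal σ R 3 :=
  mul_mem_orderIdeal (mul_mem_orderIdeal (mem_orderIdeal_one.mpr hp)
    (mem_orderIdeal_one.mpr hq)) (mem_orderIdeal_one.mpr hr)

end orderIdeal

theorem X_zero_pow_mul_X_one_pow_eq_monomial (i j : ℕ) :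
    (X 0 ^ i * X 1 ^ j : MvPowerSeries (Fin 2) R) = monomial (single 0 i + single 1 j) 1 := by
  rw [X_pow_eq, X_pow_eq, monomial_mul_monomial, one_mul]

theorem sub_sum_X_pow_mul_X_pow_mem_orderIdeal (f : MvPowerSeries (Fin 2) R) (n : ℕ) :
    f - ∑ i ∈ Finset.range n, ∑ j ∈ Finset.range (n - i),
      C (coeff (single 0 i + single 1 j) f) * X 0 ^ i * X 1 ^ j ∈ orderIdeal (Fin 2) R n := by
  classical
  refine le_order fun d hd => ?_
  have hd' : d 0 + d 1 < n := by exact_mod_cast d.degree_fin_two ▸ hd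
  have hsingle : ∀ i j : ℕ, d = single 0 i + single 1 j ↔ i = d 0 ∧ j = d 1 := by
    refine fun i j => ⟨fun h => by simp [h], fun ⟨hi, hj⟩ => ?_⟩
    ext k
    fin_cases k <;> simp [hi, hj]
  simp only [map_sub, map_sum, mul_assoc, coeff_C_mul, X_zero_pow_mul_X_one_pow_eq_monomial,
    coeff_monomial, hsingle, mul_ite, mul_one, mul_zero]
  rw [Finset.sum_eq_single_of_mem (d 0) (by simp; omega) fun i _ hi => by simp [hi],
    Finset.sum_eq_single_of_mem (d 1) (by simp; omega) fun j _ hj => by simp [hj],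
    if_pos ⟨rfl, rfl⟩, ← (hsingle _ _).mpr ⟨rfl, rfl⟩, sub_self]

end MvPowerSeries

section FormalGroupLaw

variable {R : Type*} [CommRing R] {F g : MvPowerSeries (Fin 2) R}

theorem coeff_eq_neg_coeff_of_eq_X_add_X_sub (hg : F = X 0 + X 1 - X 0 * X 1 * g) (i j : ℕ) :
    coeff (single 0 i + single 1 j) g = -coeff (single 0 (i + 1) + single 1 (j + 1)) F := by
  classical
  have hexp : (single 0 (i + 1) + single 1 (j + 1) : Fin 2 →₀ ℕ) =
      (single 0 1 + single 1 1) + (single 0 i + single 1 j) := by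
    ext k; fin_cases k <;> simp [add_comm]
  have hX : (X 0 * X 1 : MvPowerSeries (Fin 2) R) = monomial (single 0 1 + single 1 1) 1 := by
    simpa using X_zero_pow_mul_X_one_pow_eq_monomial (R := R) 1 1
  have h0 : single 0 (i + 1) + single 1 (j + 1) ≠ single (0 : Fin 2) 1 := fun h => by
    simpa using DFunLike.congr_fun h 1
  have h1 : single 0 (i + 1) + single 1 (j + 1) ≠ single (1 : Fin 2) 1 := fun h => by
    simpa using DFunLike.congr_fun h 0
  rw [hg, map_sub, map_add, coeff_X, coeff_X, if_neg h0, if_neg h1, hX, hexp,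
    coeff_add_monomial_mul, one_mul]
  ring

theorem smodEq_of_eq_X_add_X_sub (hg : F = X 0 + X 1 - X 0 * X 1 * g) :
    F ≡ X 0 + X 1 + C (coeff (single 0 1 + single 1 1) F) * X 0 * X 1
      [SMOD orderIdeal (Fin 2) R 3] := by
  have hg₀ : coeff (single 0 1 + single 1 1) F = -constantCoeff g := by
    have h := coeff_eq_neg_coeff_of_eq_X_add_X_sub hg 0 0
    simp only [Finsupp.single_zero, add_zero, zero_add, coeff_zero_eq_constantCoeff_apply] at h
    rw [h, neg_neg]
  have hX : ∀ i, (X i : MvPowerSeries (Fin 2) R) ∈ orderIdeal (Fin 2) R 1 := fun i =>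
    mem_orderIdeal_one.mpr (constantCoeff_X i)
  rw [SModEq.sub_mem, hg₀, hg]
  have hg₁ : g - C (constantCoeff g) ∈ orderIdeal (Fin 2) R 1 :=
    mem_orderIdeal_one.mpr (by simp)
  convert neg_mem (mul_mem_orderIdeal (mul_mem_orderIdeal (hX 0) (hX 1)) hg₁) using 1
  simp only [map_neg]
  ring

theorem substSeries_smodEq_of_eq_X_add_X_sub {τ : Type*} (hg : F = X 0 + X 1 - X 0 * X 1 * g)
    {a b : MvPowerSeries τ R} (ha : constantCoeff a = 0) (hb : constantCoeff b = 0) :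
    substSeries ![a, b] F ≡ a + b + C (coeff (single 0 1 + single 1 1) F) * a * b
      [SMOD orderIdeal τ R 3] := by
  have hab : ∀ i, constantCoeff (![a, b] i) = 0 := Fin.forall_fin_two.mpr ⟨ha, hb⟩
  have hsubst := hasSubst_of_constantCoeff_zero hab
  rw [substSeries_eq_subst hab]
  convert subst_smodEq_subst hab (smodEq_of_eq_X_add_X_sub hg) using 1
  simp [subst_add hsubst, subst_mul hsubst, subst_X hsubst]

theorem IsFormalInverse.smodEq_of_eq_X_add_X_sub (hg : F = X 0 + X 1 - X 0 * X 1 * g)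
    {ι : PowerSeries R} (hι : IsFormalInverse F ι) :
    ι ≡ -X () + C (coeff (single 0 1 + single 1 1) F) * X () ^ 2 [SMOD orderIdeal Unit R 3] := by
  have hX : constantCoeff (X () : MvPowerSeries Unit R) = 0 := constantCoeff_X ()
  have hF := substSeries_smodEq_of_eq_X_add_X_sub hg hX hι.1
  have hcube := mul_mul_mem_orderIdeal_three hX hX hι.1
  rw [show ![X (), ι] = ![PowerSeries.X, ι] from rfl, hι.2] at hF
  rw [SModEq.idealQuotientMk] at hF ⊢
  rw [← Ideal.Quotient.eq_zero_iff_mem] at hcube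
  simp only [map_add, map_mul, map_neg, map_pow, map_zero] at hF hcube ⊢
  -- `ι = -t - a t ι`; substituting this once into `t ι` leaves a multiple of `t² ι`.
  linear_combination (Ideal.Quotient.mk _ (C (coeff (single 0 1 + single 1 1) F)) *
    Ideal.Quotient.mk _ (X ()) - 1) * hF +
    Ideal.Quotient.mk _ (C (coeff (single 0 1 + single 1 1) F)) ^ 2 * hcube

theorem IsFormalInverse.constantCoeff_substSeries {τ : Type*} (hF₀ : constantCoeff F = 0)
    {ι : PowerSeries R} (hι : IsFormalInverse F ι) (i j : τ) :
    constantCoeff (substSeries ![X i, substSeries (fun _ : Unit => X j) ι] F) = 0 :=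
  constantCoeff_substSeries_eq_zero (Fin.forall_fin_two.mpr ⟨constantCoeff_X i,
    constantCoeff_substSeries_eq_zero (fun _ => constantCoeff_X j) hι.1⟩) hF₀

theorem IsFormalInverse.substSeries_smodEq {τ : Type*} (hg : F = X 0 + X 1 - X 0 * X 1 * g)
    {ι : PowerSeries R} (hι : IsFormalInverse F ι) (i j : τ) :
    substSeries ![X i, substSeries (fun _ : Unit => X j) ι] F ≡
      X i - X j + C (coeff (single 0 1 + single 1 1) F) * (X j ^ 2 - X i * X j)
      [SMOD orderIdeal τ R 3] := by
  have hXj : ∀ _ : Unit, constantCoeff (X j : MvPowerSeries τ R) = 0 :=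
    fun _ => constantCoeff_X j
  have hsubst := hasSubst_of_constantCoeff_zero hXj
  have hw0 : constantCoeff (substSeries (fun _ : Unit => X j) ι) = 0 :=
    constantCoeff_substSeries_eq_zero hXj hι.1
  have hw : substSeries (fun _ : Unit => X j) ι ≡
      -X j + C (coeff (single 0 1 + single 1 1) F) * X j ^ 2 [SMOD orderIdeal τ R 3] := by
    rw [substSeries_eq_subst hXj]
    convert subst_smodEq_subst hXj (hι.smodEq_of_eq_X_add_X_sub hg) using 1
    rw [← substAlgHom_apply hsubst]
    simp only [map_add, map_neg, map_mul, map_pow, substAlgHom_apply, subst_C, subst_X hsubst]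
  have hF := substSeries_smodEq_of_eq_X_add_X_sub hg (constantCoeff_X i) hw0
  have hcube := mul_mul_mem_orderIdeal_three (constantCoeff_X (R := R) i) (constantCoeff_X j)
    (constantCoeff_X j)
  rw [SModEq.idealQuotientMk] at hF hw ⊢
  rw [← Ideal.Quotient.eq_zero_iff_mem] at hcube
  simp only [map_add, map_sub, map_mul, map_neg, map_pow] at hF hw hcube ⊢
  linear_combination hF + (1 + Ideal.Quotient.mk _ (C (coeff (single 0 1 + single 1 1) F)) *
    Ideal.Quotient.mk _ (X i)) * hw +
    Ideal.Quotient.mk _ (C (coeff (single 0 1 + single 1 1) F)) ^ 2 * hcube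

theorem IsFormalGroupLaw.coeff_swap (hF : IsFormalGroupLaw R F) (i j : ℕ) :
    coeff (single 0 i + single 1 j) F = coeff (single 0 j + single 1 i) F := by
  let e : Fin 2 ↪ Fin 2 := (Equiv.swap 0 1).toEmbedding
  have hX : (X ∘ e : Fin 2 → MvPowerSeries (Fin 2) R) = ![X 1, X 0] := by
    ext1 k; fin_cases k <;> rfl
  have hrename : rename e F = F := by
    rw [rename_eq_subst, hX, ← substSeries_eq_subst (Fin.forall_fin_two.mpr
      ⟨constantCoeff_X 1, constantCoeff_X 0⟩), hF.comm]
  rw [← coeff_embDomain_rename e, hrename, Finsupp.embDomain_add, Finsupp.embDomain_single,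
    Finsupp.embDomain_single, add_comm]
  rfl

theorem IsFormalGroupLaw.smodEq_of_eq_X_add_X_sub (hF : IsFormalGroupLaw R F)
    (hg : F = X 0 + X 1 - X 0 * X 1 * g) :
    g ≡ -C (coeff (single 0 1 + single 1 1) F)
      - C (coeff (single 0 2 + single 1 1) F) * (X 0 + X 1)
      - C (coeff (single 0 3 + single 1 1) F) * (X 0 ^ 2 + X 1 ^ 2)
      - C (coeff (single 0 2 + single 1 2) F) * X 0 * X 1 [SMOD orderIdeal (Fin 2) R 3] := by
  rw [SModEq.sub_mem]
  convert sub_sum_X_pow_mul_X_pow_mem_orderIdeal g 3 using 2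
  simp only [Finset.sum_range_succ, Finset.range_zero, Finset.sum_empty,
    coeff_eq_neg_coeff_of_eq_X_add_X_sub hg]
  rw [hF.coeff_swap (0 + 1) (1 + 1), hF.coeff_swap (0 + 1) (2 + 1)]
  simp only [map_neg]
  ring

theorem IsFormalGroupLaw.substSeries_fDiff_smodEq (hF : IsFormalGroupLaw R F)
    (hg : F = X 0 + X 1 - X 0 * X 1 * g) {ι : PowerSeries R} (hι : IsFormalInverse F ι) :
    substSeries ![fDiff F ι, fDiffSwap F ι] g ≡
      -C (coeff (single 0 1 + single 1 1) F)
        - C (coeff (single 0 1 + single 1 1) F * coeff (single 0 2 + single 1 1) F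
          + 2 * coeff (single 0 3 + single 1 1) F - coeff (single 0 2 + single 1 2) F)
          * (X 0 - X 1) ^ 2 [SMOD orderIdeal (Fin 2) R 3] := by
  have hF₀ : constantCoeff F = 0 := by simp [hg]
  have huv : ∀ i, constantCoeff (![fDiff F ι, fDiffSwap F ι] i) = 0 := Fin.forall_fin_two.mpr
    ⟨hι.constantCoeff_substSeries hF₀ 0 1, hι.constantCoeff_substSeries hF₀ 1 0⟩
  have hsubst := hasSubst_of_constantCoeff_zero huv
  have hG := subst_smodEq_subst huv (hF.smodEq_of_eq_X_add_X_sub hg)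
  have hu : fDiff F ι ≡ _ [SMOD _] := hι.substSeries_smodEq hg 0 1
  have hv : fDiffSwap F ι ≡ _ [SMOD _] := hι.substSeries_smodEq hg 1 0
  have hL₀ := mul_mul_mem_orderIdeal_three (p := X 0 - X 1) (q := X 0 - X 1) (by simp) (by simp)
    (constantCoeff_X (R := R) (0 : Fin 2))
  have hL₁ := mul_mul_mem_orderIdeal_three (p := X 0 - X 1) (q := X 0 - X 1) (by simp) (by simp)
    (constantCoeff_X (R := R) (1 : Fin 2))
  rw [substSeries_eq_subst huv, ← substAlgHom_apply hsubst]
  rw [← substAlgHom_apply hsubst, ← substAlgHom_apply hsubst] at hG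
  rw [SModEq.idealQuotientMk] at hG hu hv ⊢
  rw [← Ideal.Quotient.eq_zero_iff_mem] at hL₀ hL₁
  simp only [map_add, map_sub, map_mul, map_neg, map_pow, map_ofNat, substAlgHom_apply, subst_C,
    subst_X hsubst, Matrix.cons_val_zero, Matrix.cons_val_one] at hG hu hv hL₀ hL₁ ⊢
  rw [hG, hu, hv]
  -- With `L = x - y` we have `u = L (1 - a y)` and `v = -L (1 - a x)`, so all error terms are
  -- multiples of `L² x` and `L² y`.
  set x := Ideal.Quotient.mk (orderIdeal (Fin 2) R 3) (X 0)
  set y := Ideal.Quotient.mk (orderIdeal (Fin 2) R 3) (X 1)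
  set a := Ideal.Quotient.mk (orderIdeal (Fin 2) R 3) (C (coeff (single 0 1 + single 1 1) F))
  set b := Ideal.Quotient.mk (orderIdeal (Fin 2) R 3) (C (coeff (single 0 3 + single 1 1) F))
  set c := Ideal.Quotient.mk (orderIdeal (Fin 2) R 3) (C (coeff (single 0 2 + single 1 2) F))
  linear_combination (-b * (-2 * a + a ^ 2 * x) - c * a) * hL₀ +
    (-b * (-2 * a + a ^ 2 * y) - c * (a - a ^ 2 * x)) * hL₁

end FormalGroupLaw

/-- Let `F` be a one-dimensional commutative formal group law over `R`,
with `a₁₁, a₁₂, a₁₃, a₂₂` the coefficients of `xy, x²y, x³y, x²y²` in `F`, and let `g` be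
the unique series with `F(x,y) = x + y - xy·g(x,y)`. Then `g(x -_F y, y -_F x)` and
`-a₁₁ - (a₁₁a₁₂ + 2a₁₃ - a₂₂)(x-y)²` have equal coefficients in all total degrees `< 3`. -/
theorem fgl_g_of_fDiff_mod_deg3 {R : Type*} [CommRing R]
    (F : MvPowerSeries (Fin 2) R) (hF : IsFormalGroupLaw R F)
    (ι : PowerSeries R) (hι : IsFormalInverse F ι)
    (a₁₁ a₁₂ a₁₃ a₂₂ : R)
    (ha₁₁ : a₁₁ = MvPowerSeries.coeff (R := R) (Finsupp.single 0 1 + Finsupp.single 1 1) F)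
    (ha₁₂ : a₁₂ = MvPowerSeries.coeff (R := R) (Finsupp.single 0 2 + Finsupp.single 1 1) F)
    (ha₁₃ : a₁₃ = MvPowerSeries.coeff (R := R) (Finsupp.single 0 3 + Finsupp.single 1 1) F)
    (ha₂₂ : a₂₂ = MvPowerSeries.coeff (R := R) (Finsupp.single 0 2 + Finsupp.single 1 2) F)
    (g : MvPowerSeries (Fin 2) R) (hg : F = X 0 + X 1 - (X 0 * X 1) * g) :
    ∀ d : Fin 2 →₀ ℕ, d 0 + d 1 < 3 →
      MvPowerSeries.coeff (R := R) d
        (MvPowerSeries.substSeries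
          (![fDiff F ι, fDiffSwap F ι] : Fin 2 → MvPowerSeries (Fin 2) R) g) =
      MvPowerSeries.coeff (R := R) d
        (-(C (σ := Fin 2) (R := R) a₁₁)
          - C (σ := Fin 2) (R := R) (a₁₁ * a₁₂ + 2 * a₁₃ - a₂₂) * (X 0 - X 1) ^ 2) := by
  subst ha₁₁ ha₁₂ ha₁₃ ha₂₂
  intro d hd
  refine coeff_eq_coeff_of_smodEq (hF.substSeries_fDiff_smodEq hg hι) ?_
  exact_mod_cast d.degree_fin_two ▸ hd
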